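/- arXiv:2602.06787 — 5 statements merged into one kernel-verified Lean document; each statement's English description precedes it below -/
import Mathlib

section
/- Let P and P' be finite graded posets, let c_t denote their GWL colorings, and let h_t denote the message-passing colorings induced by an arbitrary update function U and initial value h₀ (the same U and h₀ for both posets). Then for every t ∈ ℕ, every σ ∈ P and every σ' ∈ P': if c_t(σ) = c_t(σ') then h_t(σ) = h_t(σ'). Consequently, if P and P' are GWL-equivalent then for every t the histograms {{h_t(σ) : σ ∈ P}} and {{h_t(σ') : σ' ∈ P'}} are equal; that is, the GWL test is at least as powerful as any message-passing network on graded posets. -/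
/-- The nested color domain of the GWL test: a color at iteration `t+1` is a tuple of the
previous color together with the four adjacency multisets of previous colors. -/
def GWLC : ℕ → Type
  | 0 => Unit
  | t + 1 => GWLC t × Multiset (GWLC t) × Multiset (GWLC t) ×
      Multiset (GWLC t × GWLC t) × Multiset (GWLC t × GWLC t)

namespace GWL

variable {α : Type}

/-- `Covers lt τ σ` : `τ ⋖ σ`, i.e. `τ < σ` with nothing strictly in between. -/
def Covers (lt : α → α → Prop) (τ σ : α) : Prop :=
  lt τ σ ∧ ¬ ∃ q, lt τ q ∧ lt q σ

/-- A strict order `lt` together with a dimension function `dim` makes a graded poset. -/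
structure IsGradedPoset (lt : α → α → Prop) (dim : α → ℕ) : Prop where
  irrefl : ∀ x, ¬ lt x x
  trans : ∀ x y z, lt x y → lt y z → lt x z
  mono : ∀ x y, lt x y → dim x ≤ dim y
  cover : ∀ x y, Covers lt x y → dim y = dim x + 1

variable [Fintype α]

open Classical in
/-- The boundary `B(σ) = {τ : τ ⋖ σ}`. -/
noncomputable def boundary (lt : α → α → Prop) (σ : α) : Finset α :=
  Finset.univ.filter fun τ => Covers lt τ σ

open Classical in
/-- The coboundary `C(σ) = {τ : σ ⋖ τ}`. -/
noncomputable def coboundary (lt : α → α → Prop) (σ : α) : Finset α :=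
  Finset.univ.filter fun τ => Covers lt σ τ

open Classical in
/-- The lower adjacency `N↓(σ) = {(σ', τ) : τ ⋖ σ, τ ⋖ σ', σ' ≠ σ}`. -/
noncomputable def lowerAdj (lt : α → α → Prop) (σ : α) : Finset (α × α) :=
  Finset.univ.filter fun p => Covers lt p.2 σ ∧ Covers lt p.2 p.1 ∧ p.1 ≠ σ

open Classical in
/-- The upper adjacency `N↑(σ) = {(σ', τ) : σ ⋖ τ, σ' ⋖ τ, σ' ≠ σ}`. -/
noncomputable def upperAdj (lt : α → α → Prop) (σ : α) : Finset (α × α) :=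
  Finset.univ.filter fun p => Covers lt σ p.2 ∧ Covers lt p.1 p.2 ∧ p.1 ≠ σ

/-- The GWL coloring of a finite graded poset (with strict order `lt`). -/
noncomputable def color (lt : α → α → Prop) : (t : ℕ) → α → GWLC t
  | 0, _ => ()
  | t + 1, σ =>
      (color lt t σ,
       (boundary lt σ).val.map (color lt t),
       (coboundary lt σ).val.map (color lt t),
       (lowerAdj lt σ).val.map (fun p => (color lt t p.1, color lt t p.2)),
       (upperAdj lt σ).val.map (fun p => (color lt t p.1, color lt t p.2)))

/-- The histogram of GWL colors at iteration `t`. -/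
noncomputable def hist (lt : α → α → Prop) (t : ℕ) : Multiset (GWLC t) :=
  Finset.univ.val.map (color lt t)

end GWL

namespace GWL

/-- The message-passing coloring on a finite graded poset induced by an update function `U`
and an initial value `h₀`:
`h_{t+1}(σ) = U (h_t σ) {{h_t τ : τ ∈ B σ}} {{h_t τ : τ ∈ C σ}} {{(h_t σ', h_t τ) : (σ',τ) ∈ N↓ σ}} {{(h_t σ', h_t τ) : (σ',τ) ∈ N↑ σ}}`. -/
noncomputable def mp {α D : Type} [Fintype α]
    (U : D → Multiset D → Multiset D → Multiset (D × D) → Multiset (D × D) → D)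
    (h₀ : D) (lt : α → α → Prop) : ℕ → α → D
  | 0, _ => h₀
  | t + 1, σ => U (mp U h₀ lt t σ)
      ((boundary lt σ).val.map (mp U h₀ lt t))
      ((coboundary lt σ).val.map (mp U h₀ lt t))
      ((lowerAdj lt σ).val.map fun p => (mp U h₀ lt t p.1, mp U h₀ lt t p.2))
      ((upperAdj lt σ).val.map fun p => (mp U h₀ lt t p.1, mp U h₀ lt t p.2))

/-- Histogram of message-passing colorings. -/
noncomputable def mpHist {α D : Type} [Fintype α]
    (U : D → Multiset D → Multiset D → Multiset (D × D) → Multiset (D × D) → D)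
    (h₀ : D) (lt : α → α → Prop) (t : ℕ) : Multiset D :=
  Finset.univ.val.map (mp U h₀ lt t)

end GWL

/-!
The GWL color at step `t + 1` records exactly the data that the update `U` consumes at
step `t + 1`, so the message-passing feature is a function `decode U h₀ t` of the GWL color,
defined by recursion on `t` without reference to the poset. Equal colors, in the same or in
different posets, therefore carry equal features, and equal color histograms push forward to
equal feature histograms.
-/

namespace GWL

variable {D : Type}

def decode (U : D → Multiset D → Multiset D → Multiset (D × D) → Multiset (D × D) → D)
    (h₀ : D) : (t : ℕ) → GWLC t → D
  | 0, _ => h₀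
  | t + 1, c => U (decode U h₀ t c.1) (c.2.1.map (decode U h₀ t))
      (c.2.2.1.map (decode U h₀ t))
      (c.2.2.2.1.map (Prod.map (decode U h₀ t) (decode U h₀ t)))
      (c.2.2.2.2.map (Prod.map (decode U h₀ t) (decode U h₀ t)))

variable {α : Type} [Fintype α]
  (U : D → Multiset D → Multiset D → Multiset (D × D) → Multiset (D × D) → D) (h₀ : D)
  (lt : α → α → Prop)

theorem mp_eq_decode_color (t : ℕ) (σ : α) :
    mp U h₀ lt t σ = decode U h₀ t (color lt t σ) := by
  induction t generalizing σ with
  | zero => rfl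
  | succ t ih =>
    simp only [mp, color, decode, Multiset.map_map, Function.comp_def, Prod.map, ih]

theorem mpHist_eq_map_decode_hist (t : ℕ) :
    mpHist U h₀ lt t = (hist lt t).map (decode U h₀ t) := by
  simp only [mpHist, hist, Multiset.map_map, Function.comp_def, mp_eq_decode_color]

end GWL

theorem gwl_at_least_as_powerful_as_message_passing_general
    {α β D : Type} [Fintype α] [Fintype β]
    (ltα : α → α → Prop) (ltβ : β → β → Prop)
    (U : D → Multiset D → Multiset D → Multiset (D × D) → Multiset (D × D) → D)
    (h₀ : D) :
    (∀ (t : ℕ) (σ : α) (σ' : β), GWL.color ltα t σ = GWL.color ltβ t σ' →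
        GWL.mp U h₀ ltα t σ = GWL.mp U h₀ ltβ t σ') ∧
    ((∀ t : ℕ, GWL.hist ltα t = GWL.hist ltβ t) →
        ∀ t : ℕ, GWL.mpHist U h₀ ltα t = GWL.mpHist U h₀ ltβ t) := by
  refine ⟨fun t σ σ' h => ?_, fun h t => ?_⟩
  · rw [GWL.mp_eq_decode_color, GWL.mp_eq_decode_color, h]
  · rw [GWL.mpHist_eq_map_decode_hist, GWL.mpHist_eq_map_decode_hist, h]

/-- The GWL test is at least as powerful as any message-passing network on
graded posets: equal GWL colors imply equal message-passing features, and GWL-equivalence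
implies equality of the message-passing histograms at every iteration. -/
theorem gwl_at_least_as_powerful_as_message_passing
    {α β D : Type} [Fintype α] [Fintype β]
    (ltα : α → α → Prop) (dimα : α → ℕ) (ltβ : β → β → Prop) (dimβ : β → ℕ)
    (hP : GWL.IsGradedPoset ltα dimα) (hP' : GWL.IsGradedPoset ltβ dimβ)
    (U : D → Multiset D → Multiset D → Multiset (D × D) → Multiset (D × D) → D)
    (h₀ : D) :
    (∀ (t : ℕ) (σ : α) (σ' : β), GWL.color ltα t σ = GWL.color ltβ t σ' →
        GWL.mp U h₀ ltα t σ = GWL.mp U h₀ ltβ t σ') ∧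
    ((∀ t : ℕ, GWL.hist ltα t = GWL.hist ltβ t) →
        ∀ t : ℕ, GWL.mpHist U h₀ ltα t = GWL.mpHist U h₀ ltβ t) :=
  gwl_at_least_as_powerful_as_message_passing_general ltα ltβ U h₀
end

section
/- There exist hypergraphs H and H' that are HWL-equivalent but whose incidence posets I(H) and I(H') are not GWL-equivalent (in fact, already the histograms of the GWL colors c_1 on I(H) and I(H') differ). In particular, the I-CatWL test (GWL applied to incidence posets) is not less powerful than the HWL test. -/
/-- A hypergraph `H = (V, E, f)`: finite vertex and edge sets together with a map assigning
to each hyperedge a nonempty set of vertices. -/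
structure HyperGraph where
  V : Type
  E : Type
  [fintypeV : Fintype V]
  [fintypeE : Fintype E]
  [decEqV : DecidableEq V]
  [decEqE : DecidableEq E]
  f : E → Finset V
  nonempty : ∀ e, (f e).Nonempty

attribute [instance] HyperGraph.fintypeV HyperGraph.fintypeE
  HyperGraph.decEqV HyperGraph.decEqE

/-- The nested color domain of the hypergraph WL (HWL) test: a color at iteration `t+1` is
the previous color together with a multiset of previous colors of incident elements. -/
def HWLC : ℕ → Type
  | 0 => Unit
  | t + 1 => HWLC t × Multiset (HWLC t)

/-- The HWL coloring of a hypergraph on the disjoint union `V ⊔ E`: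
`d_{t+1}(v) = (d_t v, {{d_t e : v ∈ f e}})` and `d_{t+1}(e) = (d_t e, {{d_t v : v ∈ f e}})`. -/
noncomputable def hwl (H : HyperGraph) : (t : ℕ) → H.V ⊕ H.E → HWLC t
  | 0, _ => ()
  | t + 1, Sum.inl v =>
      (hwl H t (Sum.inl v),
       (Finset.univ.filter fun e => v ∈ H.f e).val.map fun e => hwl H t (Sum.inr e))
  | t + 1, Sum.inr e =>
      (hwl H t (Sum.inr e), (H.f e).val.map fun v => hwl H t (Sum.inl v))

/-- The histogram of HWL colors over `V ⊔ E` at iteration `t`. -/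
noncomputable def hwlHist (H : HyperGraph) (t : ℕ) : Multiset (HWLC t) :=
  Finset.univ.val.map (hwl H t)

/-- Two hypergraphs are HWL-equivalent if their HWL color histograms agree at every
iteration. -/
def HWLEquiv (H H' : HyperGraph) : Prop := ∀ t : ℕ, hwlHist H t = hwlHist H' t

/-- The strict order of the incidence poset `I(H)` on `V ⊔ E`: the only strict relations are
`v < e` for `v ∈ f e`. -/
def incLT (H : HyperGraph) : H.V ⊕ H.E → H.V ⊕ H.E → Prop
  | Sum.inl v, Sum.inr e => v ∈ H.f e
  | _, _ => False

/-- The partial order of the incidence poset (the reflexive closure of `incLT`). -/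
def incLE (H : HyperGraph) (x y : H.V ⊕ H.E) : Prop := x = y ∨ incLT H x y

/-- The dimension function of the incidence poset: `dim v = 0`, `dim e = 1`. -/
def incDim (H : HyperGraph) : H.V ⊕ H.E → ℕ
  | Sum.inl _ => 0
  | Sum.inr _ => 1

/-!
HWL colours do not record whether an element of `V ⊔ E` is a vertex or a hyperedge, so HWL
cannot tell a hypergraph from its dual (vertices and hyperedges swapped, incidence transposed):
swapping the two summands carries one HWL colouring onto the other. GWL on the incidence poset
does see the difference: since hyperedges are nonempty, the boundary multiset of a colour is
empty exactly at the vertices, so every GWL histogram after the first round counts the vertices.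
A single hyperedge on two vertices and its dual, two hyperedges on one vertex, thus separate the
two tests.
-/
open Finset

namespace HyperGraph

-- Reducible, so that the instances of `(H.dual hcov).V` are found as those of `H.E`.
abbrev dual (H : HyperGraph) (hcov : ∀ v, ∃ e, v ∈ H.f e) : HyperGraph where
  V := H.E
  E := H.V
  f v := univ.filter fun e => v ∈ H.f e
  nonempty v := by simpa [Finset.Nonempty] using hcov v

theorem hwl_dual_swap (H : HyperGraph) (hcov : ∀ v, ∃ e, v ∈ H.f e) (t : ℕ)
    (x : H.V ⊕ H.E) :
    hwl (H.dual hcov) t x.swap = hwl H t x := by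
  induction t generalizing x with
  | zero => rfl
  | succ t ih =>
    rcases x with v | e
    · exact Prod.ext (ih (.inl v)) (Multiset.map_congr rfl fun e _ => ih (.inr e))
    · have hinc : (univ.filter fun v : H.V => e ∈ (H.dual hcov).f v) = H.f e := by
        ext v; simp
      exact Prod.ext (ih (.inr e))
        (Multiset.map_congr (congrArg val hinc) fun v _ => ih (.inl v))

theorem hwlEquiv_dual (H : HyperGraph) (hcov : ∀ v, ∃ e, v ∈ H.f e) :
    HWLEquiv H (H.dual hcov) := by
  intro t
  rw [hwlHist, hwlHist, ← Multiset.map_univ_val_equiv (Equiv.sumComm H.V H.E), Multiset.map_map]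
  congr 1
  funext x
  exact (hwl_dual_swap H hcov t x).symm

end HyperGraph

namespace GWL

variable {α : Type} [Fintype α]

theorem hist_succ_map_card_boundary (lt : α → α → Prop) (t : ℕ) :
    (hist lt (t + 1)).map (fun c => Multiset.card c.2.1) =
      univ.val.map fun σ => #(boundary lt σ) := by
  simp only [hist, Multiset.map_map]
  congr 1
  funext σ
  exact Multiset.card_map _ _

end GWL

section Incidence

variable (H : HyperGraph)

theorem covers_incLT_iff {τ σ : H.V ⊕ H.E} : GWL.Covers (incLT H) τ σ ↔ incLT H τ σ := by
  refine ⟨And.left, fun h => ⟨h, ?_⟩⟩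
  rintro ⟨q, hτq, hqσ⟩
  rcases τ with _ | _ <;> rcases q with _ | _ <;> simp_all [incLT]

theorem boundary_incLT_inl (v : H.V) : GWL.boundary (incLT H) (.inl v) = ∅ := by
  ext τ; rcases τ with _ | _ <;> simp [GWL.boundary, covers_incLT_iff, incLT]

theorem boundary_incLT_inr_nonempty (e : H.E) : (GWL.boundary (incLT H) (.inr e)).Nonempty := by
  obtain ⟨v, hv⟩ := H.nonempty e
  exact ⟨.inl v, by simpa [GWL.boundary, covers_incLT_iff, incLT] using hv⟩

theorem count_zero_card_boundary_incLT :
    (univ.val.map fun σ => #(GWL.boundary (incLT H) σ)).count 0 = Fintype.card H.V := by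
  rw [Multiset.count_map, ← Finset.filter_val, Finset.card_val, Finset.card_filter,
    Fintype.sum_sum_type]
  simp [boundary_incLT_inl, fun e => (boundary_incLT_inr_nonempty H e).card_pos.ne]

end Incidence

theorem card_V_eq_of_hist_incLT_eq {H H' : HyperGraph} {t : ℕ}
    (h : GWL.hist (incLT H) (t + 1) = GWL.hist (incLT H') (t + 1)) :
    Fintype.card H.V = Fintype.card H'.V := by
  have := congrArg (Multiset.count 0 ∘ Multiset.map fun c => Multiset.card c.2.1) h
  simpa only [Function.comp_apply, GWL.hist_succ_map_card_boundary,
    count_zero_card_boundary_incLT] using this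

theorem HyperGraph.hist_incLT_ne_hist_incLT_dual (H : HyperGraph) (hcov : ∀ v, ∃ e, v ∈ H.f e)
    (hcard : Fintype.card H.V ≠ Fintype.card H.E) (t : ℕ) :
    GWL.hist (incLT H) (t + 1) ≠ GWL.hist (incLT (H.dual hcov)) (t + 1) :=
  fun h => hcard (card_V_eq_of_hist_incLT_eq h)

/-- There exist hypergraphs that are HWL-equivalent but whose incidence
posets are distinguished by GWL (already at iteration 1); hence the `I`-CatWL test is not
less powerful than HWL. -/
theorem ICatWL_not_less_powerful_than_HWL :
    ∃ H H' : HyperGraph, HWLEquiv H H' ∧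
      GWL.hist (incLT H) 1 ≠ GWL.hist (incLT H') 1 ∧
      ¬ (∀ t : ℕ, GWL.hist (incLT H) t = GWL.hist (incLT H') t) := by
  let H : HyperGraph :=
    { V := Fin 2, E := Fin 1, f := fun _ => univ, nonempty := fun _ => univ_nonempty }
  have hcov : ∀ v, ∃ e, v ∈ H.f e := fun v => ⟨0, mem_univ v⟩
  have hne := H.hist_incLT_ne_hist_incLT_dual hcov (by simp [H]) 0
  exact ⟨H, H.dual hcov, H.hwlEquiv_dual hcov, hne, fun h => hne (h 1)⟩
end

section
/- Let P and P' be finite graded posets in which every element of positive dimension has at least two boundary elements. Let a_t denote the GWL coloring (using all four adjacencies) and b_t the GWL_{B,↓,↑} coloring (omitting the coboundary multiset). Then for every t ∈ ℕ, σ ∈ P and σ' ∈ P': b_{t+1}(σ) = b_{t+1}(σ') implies a_t(σ) = a_t(σ'); conversely a_t(σ) = a_t(σ') implies b_t(σ) = b_t(σ'). Consequently, P and P' are GWL-equivalent if and only if they are GWL_{B,↓,↑}-equivalent: the two tests have the same expressive power on such posets. -/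
/-- Color domain for the `GWL_{B,↓,↑}` variant (coboundary omitted). -/
def GWLC3 : ℕ → Type
  | 0 => Unit
  | t + 1 => GWLC3 t × Multiset (GWLC3 t) ×
      Multiset (GWLC3 t × GWLC3 t) × Multiset (GWLC3 t × GWLC3 t)

/-- Color domain for the `GWL_{B,↑}` variant (only boundary and upper adjacency). -/
def GWLC2 : ℕ → Type
  | 0 => Unit
  | t + 1 => GWLC2 t × Multiset (GWLC2 t) × Multiset (GWLC2 t × GWLC2 t)

namespace GWL

variable {α : Type} [Fintype α]

/-- The `GWL_{B,↓,↑}` coloring: like GWL but with the coboundary multiset omitted. -/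
noncomputable def colorBDU (lt : α → α → Prop) : (t : ℕ) → α → GWLC3 t
  | 0, _ => ()
  | t + 1, σ =>
      (colorBDU lt t σ,
       (boundary lt σ).val.map (colorBDU lt t),
       (lowerAdj lt σ).val.map (fun p => (colorBDU lt t p.1, colorBDU lt t p.2)),
       (upperAdj lt σ).val.map (fun p => (colorBDU lt t p.1, colorBDU lt t p.2)))

/-- The `GWL_{B,↑}` coloring: like GWL but keeping only the boundary and upper-adjacency
multisets. -/
noncomputable def colorBU (lt : α → α → Prop) : (t : ℕ) → α → GWLC2 t
  | 0, _ => ()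
  | t + 1, σ =>
      (colorBU lt t σ,
       (boundary lt σ).val.map (colorBU lt t),
       (upperAdj lt σ).val.map (fun p => (colorBU lt t p.1, colorBU lt t p.2)))

/-- Histogram of `GWL_{B,↓,↑}` colors. -/
noncomputable def histBDU (lt : α → α → Prop) (t : ℕ) : Multiset (GWLC3 t) :=
  Finset.univ.val.map (colorBDU lt t)

/-- Histogram of `GWL_{B,↑}` colors. -/
noncomputable def histBU (lt : α → α → Prop) (t : ℕ) : Multiset (GWLC2 t) :=
  Finset.univ.val.map (colorBU lt t)

end GWL

/-!
Forgetting the coboundary component turns `a_t` into `b_t`. Conversely, every `τ ∈ C(σ)`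
occurs in `N↑(σ)` once for each element of `B(τ)` other than `σ`, i.e. `|B(τ)| - 1` times, and
`|B(τ)|` is the size of the boundary multiset inside `b_{t+1}(τ)`. An element covering another
has positive dimension, so `|B(τ)| ≥ 2`, and dividing the multiplicities of the upper-adjacency
colors by `|B(τ)| - 1` recovers the coboundary multiset: `a_t` is a function of `b_{t+1}`.
The statements about histograms follow by mapping them through these two decoders.
-/

namespace Multiset

variable {γ : Type*} [DecidableEq γ]

def divCount (S : Multiset γ) (k : γ → ℕ) : Multiset γ :=
  ∑ x ∈ S.toFinset, replicate (S.count x / k x) x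

theorem count_divCount (S : Multiset γ) (k : γ → ℕ) (x : γ) :
    (S.divCount k).count x = S.count x / k x := by
  rw [divCount, count_sum']
  simp only [count_replicate]
  rw [Finset.sum_ite_eq', ite_eq_left_iff, mem_toFinset]
  intro hx
  rw [count_eq_zero_of_notMem hx, Nat.zero_div]

theorem count_bind_replicate (T : Multiset γ) (k : γ → ℕ) (x : γ) :
    (T.bind fun y => replicate (k y) y).count x = k x * T.count x := by
  induction T using Multiset.induction_on with
  | empty => simp
  | cons y T ih =>
    rw [cons_bind, count_add, ih, count_replicate, count_cons]
    by_cases h : y = x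
    · subst h; simp [mul_add, add_comm]
    · simp [h, Ne.symm h]

theorem divCount_bind_replicate {T : Multiset γ} {k : γ → ℕ} (hk : ∀ x ∈ T, k x ≠ 0) :
    (T.bind fun y => replicate (k y) y).divCount k = T := by
  ext x
  rw [count_divCount, count_bind_replicate]
  by_cases hx : x ∈ T
  · exact Nat.mul_div_cancel_left _ (Nat.pos_of_ne_zero (hk x hx))
  · simp [count_eq_zero_of_notMem hx]

end Multiset

namespace GWL

open Multiset

def dropCoboundary : (t : ℕ) → GWLC t → GWLC3 t
  | 0, _ => ()
  | t + 1, (c, bd, _, low, up) =>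
      (dropCoboundary t c, bd.map (dropCoboundary t),
       low.map (Prod.map (dropCoboundary t) (dropCoboundary t)),
       up.map (Prod.map (dropCoboundary t) (dropCoboundary t)))

open Classical in
noncomputable def recoverCoboundary : (t : ℕ) → GWLC3 (t + 1) → GWLC t
  | 0, _ => ()
  | t + 1, (c, bd, low, up) =>
      (recoverCoboundary t c, bd.map (recoverCoboundary t),
       ((up.map Prod.snd).divCount fun y => card y.2.1 - 1).map (recoverCoboundary t),
       low.map (Prod.map (recoverCoboundary t) (recoverCoboundary t)),
       up.map (Prod.map (recoverCoboundary t) (recoverCoboundary t)))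

variable {α : Type} [Fintype α]

theorem IsGradedPoset.card_boundary_ne_one {lt : α → α → Prop} {dim : α → ℕ}
    (h : IsGradedPoset lt dim) (hb : ∀ σ, 0 < dim σ → 2 ≤ (boundary lt σ).card) (τ : α) :
    (boundary lt τ).card ≠ 1 := by
  intro hτ
  obtain ⟨σ, hσ⟩ := Finset.card_pos.mp (hτ ▸ Nat.one_pos)
  have hdim : 0 < dim τ := by
    rw [h.cover σ τ (by simpa [boundary] using hσ)]
    omega
  have := hb τ hdim
  omega

variable (lt : α → α → Prop)

theorem map_snd_upperAdj (σ : α) :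
    (upperAdj lt σ).val.map Prod.snd
      = (coboundary lt σ).val.bind fun τ => replicate ((boundary lt τ).card - 1) τ := by
  classical
  ext τ
  rw [count_bind_replicate, count_map, ← Finset.filter_val, Finset.card_val]
  by_cases hστ : Covers lt σ τ
  · have hσ : σ ∈ boundary lt τ := by simp [boundary, hστ]
    have hτ : τ ∈ coboundary lt σ := by simp [coboundary, hστ]
    have hfiber : (upperAdj lt σ).filter (fun p => τ = p.2)
        = ((boundary lt τ).erase σ).image (·, τ) := by
      ext ⟨σ', τ'⟩
      simp only [upperAdj, boundary, Finset.mem_filter, Finset.mem_univ, true_and,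
        Finset.mem_image, Finset.mem_erase, Prod.mk.injEq]
      constructor
      · rintro ⟨⟨-, hcov, hne⟩, rfl⟩
        exact ⟨σ', ⟨hne, hcov⟩, rfl, rfl⟩
      · rintro ⟨σ'', ⟨hne, hcov⟩, rfl, rfl⟩
        exact ⟨⟨hστ, hcov, hne⟩, rfl⟩
    rw [hfiber, Finset.card_image_of_injective _ (Prod.mk_left_injective τ),
      Finset.card_erase_of_mem hσ, count_eq_one_of_mem (coboundary lt σ).nodup hτ, mul_one]
  · have hτ : τ ∉ coboundary lt σ := by simp [coboundary, hστ]
    rw [count_eq_zero_of_notMem hτ, mul_zero, Finset.card_eq_zero, Finset.filter_eq_empty_iff]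
    rintro ⟨σ', τ'⟩ hp rfl
    simp [upperAdj, hστ] at hp

theorem card_boundaryColors_colorBDU (t : ℕ) (τ : α) :
    card (colorBDU lt (t + 1) τ).2.1 = (boundary lt τ).card := by
  simp [colorBDU]

theorem divCount_upperAdj_colorBDU (hb : ∀ τ, (boundary lt τ).card ≠ 1) (t : ℕ) (σ : α)
    [DecidableEq (GWLC3 (t + 1))] :
    ((upperAdj lt σ).val.map fun p => colorBDU lt (t + 1) p.2).divCount
        (fun y => card y.2.1 - 1)
      = (coboundary lt σ).val.map (colorBDU lt (t + 1)) := by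
  set b := colorBDU lt (t + 1)
  have hmult : ((upperAdj lt σ).val.map fun p => b p.2)
      = ((coboundary lt σ).val.map b).bind fun y => replicate (card y.2.1 - 1) y := by
    rw [show (fun p : α × α => b p.2) = b ∘ Prod.snd from rfl, ← map_map, map_snd_upperAdj,
      map_bind, bind_map]
    simp only [map_replicate, b, card_boundaryColors_colorBDU]
  rw [hmult]
  refine divCount_bind_replicate fun y hy => ?_
  obtain ⟨τ, hτ, rfl⟩ := mem_map.mp hy
  have hσ : σ ∈ boundary lt τ := by simpa [boundary, coboundary] using hτ
  have := Finset.card_pos.mpr ⟨σ, hσ⟩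
  have := hb τ
  simp only [b, card_boundaryColors_colorBDU]
  omega

theorem dropCoboundary_color (t : ℕ) (σ : α) :
    dropCoboundary t (color lt t σ) = colorBDU lt t σ := by
  induction t generalizing σ with
  | zero => rfl
  | succ t ih =>
    rw [color, colorBDU]
    simp only [dropCoboundary, map_map, Function.comp_def, Prod.map_apply, ih]
    rfl

theorem recoverCoboundary_colorBDU (hb : ∀ τ, (boundary lt τ).card ≠ 1) (t : ℕ) (σ : α) :
    recoverCoboundary t (colorBDU lt (t + 1) σ) = color lt t σ := by
  induction t generalizing σ with
  | zero => rfl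
  | succ t ih =>
    rw [colorBDU, color]
    simp only [recoverCoboundary, map_map, Function.comp_def, Prod.map_apply,
      divCount_upperAdj_colorBDU lt hb, ih]
    rfl

theorem histBDU_eq_map_hist (t : ℕ) :
    histBDU lt t = (hist lt t).map (dropCoboundary t) := by
  simp only [histBDU, hist, map_map, Function.comp_def, dropCoboundary_color]

theorem hist_eq_map_histBDU (hb : ∀ τ, (boundary lt τ).card ≠ 1) (t : ℕ) :
    hist lt t = (histBDU lt (t + 1)).map (recoverCoboundary t) := by
  simp only [histBDU, hist, map_map, Function.comp_def,
    recoverCoboundary_colorBDU lt hb]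

end GWL

/-- On finite graded posets in which every element of positive dimension
has at least two boundary elements, the GWL test (all four adjacencies, coloring `a_t`) and
the `GWL_{B,↓,↑}` test (coboundary omitted, coloring `b_t`) have the same expressive power:
`b_{t+1}` refines `a_t`, `a_t` refines `b_t`, and the two notions of equivalence of the two
posets coincide. -/
theorem gwl_equiv_gwlBDU
    {α β : Type} [Fintype α] [Fintype β]
    (ltα : α → α → Prop) (dimα : α → ℕ) (ltβ : β → β → Prop) (dimβ : β → ℕ)
    (hP : GWL.IsGradedPoset ltα dimα) (hP' : GWL.IsGradedPoset ltβ dimβ)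
    (hbα : ∀ σ : α, 0 < dimα σ → 2 ≤ (GWL.boundary ltα σ).card)
    (hbβ : ∀ σ : β, 0 < dimβ σ → 2 ≤ (GWL.boundary ltβ σ).card) :
    (∀ (t : ℕ) (σ : α) (σ' : β),
        GWL.colorBDU ltα (t + 1) σ = GWL.colorBDU ltβ (t + 1) σ' →
        GWL.color ltα t σ = GWL.color ltβ t σ') ∧
    (∀ (t : ℕ) (σ : α) (σ' : β),
        GWL.color ltα t σ = GWL.color ltβ t σ' →
        GWL.colorBDU ltα t σ = GWL.colorBDU ltβ t σ') ∧
    ((∀ t : ℕ, GWL.hist ltα t = GWL.hist ltβ t) ↔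
        (∀ t : ℕ, GWL.histBDU ltα t = GWL.histBDU ltβ t)) := by
  have hα := hP.card_boundary_ne_one hbα
  have hβ := hP'.card_boundary_ne_one hbβ
  refine ⟨fun t σ σ' h => ?_, fun t σ σ' h => ?_, fun h t => ?_, fun h t => ?_⟩
  · rw [← GWL.recoverCoboundary_colorBDU ltα hα, ← GWL.recoverCoboundary_colorBDU ltβ hβ, h]
  · rw [← GWL.dropCoboundary_color, ← GWL.dropCoboundary_color, h]
  · rw [GWL.histBDU_eq_map_hist, GWL.histBDU_eq_map_hist, h]
  · rw [GWL.hist_eq_map_histBDU ltα hα, GWL.hist_eq_map_histBDU ltβ hβ, h]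
end

section
/- Let P and P' be finite graded posets in which every element of positive dimension has at least two boundary elements. Let a_t denote the GWL coloring (using all four adjacencies) and b_t the GWL_{B,↑} coloring (keeping only the boundary and upper-adjacency multisets). Then for every t ∈ ℕ, σ ∈ P and σ' ∈ P': b_{2t+1}(σ) = b_{2t+1}(σ') implies a_t(σ) = a_t(σ'); conversely a_t(σ) = a_t(σ') implies b_t(σ) = b_t(σ'). Consequently, P and P' are GWL-equivalent if and only if they are GWL_{B,↑}-equivalent: the two tests have the same expressive power on such posets. -/
/-!
Reading `N↑(σ)` as `⊔_{τ ∈ C(σ)} (B(τ) \ {σ}) × {τ}`, the second components of the colored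
upper adjacency list every coface `τ` of `σ` exactly `|B(τ)| - 1` times, and `|B(τ)|` can be read
off the color of `τ` itself. When every coface has at least two faces, all these multiplicities
are positive, so one `GWL_{B,↑}` round recovers the coboundary multiset. Dually,
`N↓(σ) = ⊔_{τ ∈ B(σ)} (C(τ) \ {σ}) × {τ}`, so the lower adjacency of `σ` is recovered from the
coboundaries of its faces, i.e. after two rounds. Hence two `GWL_{B,↑}` rounds simulate one GWL
round, while the converse refinement is immediate.
-/

namespace Multiset

variable {γ δ ε ε' : Type*}

theorem map_eq_map_of_map_eq {s : Multiset γ} {t : Multiset δ}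
    {f : γ → ε} {g : δ → ε} {f' : γ → ε'} {g' : δ → ε'} (h : s.map f = t.map g)
    (H : ∀ x ∈ s, ∀ y ∈ t, f x = g y → f' x = g' y) :
    s.map f' = t.map g' := by
  rw [← rel_eq, rel_map] at h ⊢
  exact h.mono H

theorem map_prod_eq_map_prod_of_map_prod_eq {s : Multiset (γ × γ)} {t : Multiset (δ × δ)}
    {f : γ → ε} {g : δ → ε} {f' : γ → ε'} {g' : δ → ε'}
    (h : s.map (fun p => (f p.1, f p.2)) = t.map (fun p => (g p.1, g p.2)))
    (H : ∀ x y, f x = g y → f' x = g' y) :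
    s.map (fun p => (f' p.1, f' p.2)) = t.map (fun p => (g' p.1, g' p.2)) :=
  map_eq_map_of_map_eq h fun _ _ _ _ hxy =>
    Prod.ext (H _ _ (congrArg Prod.fst hxy)) (H _ _ (congrArg Prod.snd hxy))

theorem bind_eq_bind_of_map_eq {s : Multiset γ} {t : Multiset δ}
    {f : γ → ε} {g : δ → ε} {F : γ → Multiset ε'} {G : δ → Multiset ε'}
    (h : s.map f = t.map g) (H : ∀ x ∈ s, ∀ y ∈ t, f x = g y → F x = G y) :
    s.bind F = t.bind G := by
  rw [← rel_eq, rel_map] at h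
  rw [← rel_eq]
  exact rel_bind (fun _ _ hFG => rel_eq.2 hFG) (h.mono H)

theorem count_bind_replicate_s15 [DecidableEq γ] (m : Multiset γ) (n : γ → ℕ) (c : γ) :
    (m.bind fun d => replicate (n d) d).count c = n c * m.count c := by
  induction m using Multiset.induction with
  | empty => simp
  | cons a s ih =>
    rw [cons_bind, count_add, ih, count_cons, count_replicate]
    by_cases hca : c = a
    · subst hca; simp [Nat.mul_add, Nat.add_comm]
    · simp [hca, Ne.symm hca]

theorem bind_replicate_injective {m m' : Multiset γ} {n : γ → ℕ}
    (hm : ∀ c ∈ m, 0 < n c) (hm' : ∀ c ∈ m', 0 < n c)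
    (h : m.bind (fun d => replicate (n d) d) = m'.bind (fun d => replicate (n d) d)) :
    m = m' := by
  classical
  ext c
  have hc := congrArg (count c) h
  rw [count_bind_replicate_s15, count_bind_replicate_s15] at hc
  by_cases h₁ : c ∈ m
  · exact Nat.eq_of_mul_eq_mul_left (hm c h₁) hc
  by_cases h₂ : c ∈ m'
  · rw [count_eq_zero_of_notMem h₁, mul_zero, eq_comm, mul_eq_zero] at hc
    exact absurd hc (by simp [(hm' c h₂).ne', h₂])
  · rw [count_eq_zero_of_notMem h₁, count_eq_zero_of_notMem h₂]

end Multiset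

namespace GWL

open Multiset

section Incidence

variable {α : Type} {lt : α → α → Prop}

theorem covers_flip {σ τ : α} : Covers (flip lt) σ τ ↔ Covers lt τ σ := by
  simp only [Covers, flip, and_comm]

variable [Fintype α]

theorem mem_boundary {σ τ : α} : τ ∈ boundary lt σ ↔ Covers lt τ σ := by
  classical simp [boundary]

theorem mem_coboundary {σ τ : α} : τ ∈ coboundary lt σ ↔ Covers lt σ τ := by
  classical simp [coboundary]

theorem mem_upperAdj {σ : α} {p : α × α} :
    p ∈ upperAdj lt σ ↔ Covers lt σ p.2 ∧ Covers lt p.1 p.2 ∧ p.1 ≠ σ := by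
  classical simp [upperAdj]

theorem boundary_flip (σ : α) : boundary (flip lt) σ = coboundary lt σ := by
  ext; rw [mem_boundary, mem_coboundary, covers_flip]

theorem coboundary_flip (σ : α) : coboundary (flip lt) σ = boundary lt σ := by
  ext; rw [mem_boundary, mem_coboundary, covers_flip]

theorem lowerAdj_eq_upperAdj_flip (σ : α) : lowerAdj lt σ = upperAdj (flip lt) σ := by
  classical
  ext p
  simp only [lowerAdj, Finset.mem_filter, Finset.mem_univ, true_and, mem_upperAdj, covers_flip]

theorem upperAdj_val [DecidableEq α] (lt : α → α → Prop) (σ : α) :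
    (upperAdj lt σ).val = (coboundary lt σ).val.bind
      fun τ => ((boundary lt τ).erase σ).val.map (·, τ) := by
  have hdisj : ((coboundary lt σ : Finset α) : Set α).PairwiseDisjoint
      fun τ => ((boundary lt τ).erase σ).map (Function.Embedding.sectL α τ) := by
    intro τ₁ _ τ₂ _ hne
    simp only [Function.onFun, Finset.disjoint_left, Finset.mem_map,
      Function.Embedding.sectL_apply]
    rintro _ ⟨a, -, rfl⟩ ⟨b, -, hb⟩
    exact hne (congrArg Prod.snd hb).symm
  have h : upperAdj lt σ = (coboundary lt σ).disjiUnion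
      (fun τ => ((boundary lt τ).erase σ).map (Function.Embedding.sectL α τ)) hdisj := by
    ext ⟨x, τ⟩
    simp only [mem_upperAdj, Finset.mem_disjiUnion, Finset.mem_map, Finset.mem_erase,
      mem_coboundary, mem_boundary, Function.Embedding.sectL_apply, Prod.mk.injEq]
    constructor
    · rintro ⟨hστ, hxτ, hxσ⟩
      exact ⟨τ, hστ, x, ⟨hxσ, hxτ⟩, rfl, rfl⟩
    · rintro ⟨τ, hστ, x, ⟨hxσ, hxτ⟩, rfl, rfl⟩
      exact ⟨hστ, hxτ, hxσ⟩
  rw [h, Finset.disjiUnion_val]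
  rfl

theorem lowerAdj_val [DecidableEq α] (lt : α → α → Prop) (σ : α) :
    (lowerAdj lt σ).val = (boundary lt σ).val.bind
      fun τ => ((coboundary lt τ).erase σ).val.map (·, τ) := by
  rw [lowerAdj_eq_upperAdj_flip, upperAdj_val, coboundary_flip]
  simp only [boundary_flip]

end Incidence

section Colors

variable {α β : Type} [Fintype α] [Fintype β] {ltα : α → α → Prop} {ltβ : β → β → Prop}

theorem colorBU_succ_eq_iff {s : ℕ} {σ : α} {σ' : β} :
    colorBU ltα (s + 1) σ = colorBU ltβ (s + 1) σ' ↔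
      colorBU ltα s σ = colorBU ltβ s σ' ∧
      (boundary ltα σ).val.map (colorBU ltα s) = (boundary ltβ σ').val.map (colorBU ltβ s) ∧
      (upperAdj ltα σ).val.map (fun p => (colorBU ltα s p.1, colorBU ltα s p.2))
        = (upperAdj ltβ σ').val.map (fun p => (colorBU ltβ s p.1, colorBU ltβ s p.2)) :=
  Prod.ext_iff.trans (and_congr_right' Prod.ext_iff)

theorem color_succ_eq_iff {t : ℕ} {σ : α} {σ' : β} :
    color ltα (t + 1) σ = color ltβ (t + 1) σ' ↔
      color ltα t σ = color ltβ t σ' ∧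
      (boundary ltα σ).val.map (color ltα t) = (boundary ltβ σ').val.map (color ltβ t) ∧
      (coboundary ltα σ).val.map (color ltα t) = (coboundary ltβ σ').val.map (color ltβ t) ∧
      (lowerAdj ltα σ).val.map (fun p => (color ltα t p.1, color ltα t p.2))
        = (lowerAdj ltβ σ').val.map (fun p => (color ltβ t p.1, color ltβ t p.2)) ∧
      (upperAdj ltα σ).val.map (fun p => (color ltα t p.1, color ltα t p.2))
        = (upperAdj ltβ σ').val.map (fun p => (color ltβ t p.1, color ltβ t p.2)) :=
  Prod.ext_iff.trans <| and_congr_right' <| Prod.ext_iff.trans <| and_congr_right' <|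
    Prod.ext_iff.trans <| and_congr_right' Prod.ext_iff

end Colors

/-- `c.2.1` is the boundary multiset recorded in a `GWL_{B,↑}` color `c`. -/
def faceCount {s : ℕ} (c : GWLC2 (s + 1)) : ℕ :=
  card c.2.1

section Recovery

variable {α : Type} [Fintype α] {lt : α → α → Prop}

theorem faceCount_colorBU (s : ℕ) (τ : α) :
    faceCount (colorBU lt (s + 1) τ) = (boundary lt τ).card :=
  card_map _ _

theorem map_colorBU_upperAdj_snd (s : ℕ) (σ : α) :
    (upperAdj lt σ).val.map (fun p => colorBU lt (s + 1) p.2)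
      = ((coboundary lt σ).val.map (colorBU lt (s + 1))).bind
          fun c => replicate (faceCount c - 1) c := by
  classical
  rw [upperAdj_val, Multiset.map_bind, bind_map]
  refine Multiset.bind_congr fun τ hτ => ?_
  have hσ : σ ∈ boundary lt τ := mem_boundary.2 (mem_coboundary.1 hτ)
  simp only [map_map, Function.comp_def, map_const']
  rw [← Finset.card_def, Finset.card_erase_of_mem hσ, faceCount_colorBU]

theorem map_lowerAdj_pair {γ : Type*} [DecidableEq γ] (b : α → γ) (σ : α) :
    (lowerAdj lt σ).val.map (fun p => (b p.1, b p.2))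
      = (boundary lt σ).val.bind
          fun τ => (((coboundary lt τ).val.map b).erase (b σ)).map (·, b τ) := by
  classical
  rw [lowerAdj_val, Multiset.map_bind]
  refine Multiset.bind_congr fun τ hτ => ?_
  have hσ : σ ∈ coboundary lt τ := mem_coboundary.2 (mem_boundary.1 hτ)
  rw [← Finset.insert_erase hσ, Finset.insert_val_of_notMem (Finset.notMem_erase σ _),
    map_cons, erase_cons_head, map_map, map_map, Finset.erase_insert_eq_erase,
    Finset.erase_idem]
  rfl

theorem faceCount_sub_one_pos (hb : ∀ σ τ, Covers lt σ τ → 2 ≤ (boundary lt τ).card)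
    {s : ℕ} {σ : α} {c : GWLC2 (s + 1)}
    (hc : c ∈ (coboundary lt σ).val.map (colorBU lt (s + 1))) : 0 < faceCount c - 1 := by
  obtain ⟨τ, hτ, rfl⟩ := mem_map.1 hc
  have := hb σ τ (mem_coboundary.1 hτ)
  rw [faceCount_colorBU]
  omega

theorem two_le_card_boundary_of_covers {dim : α → ℕ} (hP : IsGradedPoset lt dim)
    (hb : ∀ σ, 0 < dim σ → 2 ≤ (boundary lt σ).card) {σ τ : α} (h : Covers lt σ τ) :
    2 ≤ (boundary lt τ).card :=
  hb τ (by rw [hP.cover σ τ h]; omega)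

end Recovery

section Simulation

variable {α β : Type} [Fintype α] [Fintype β] {ltα : α → α → Prop} {ltβ : β → β → Prop}

theorem map_colorBU_coboundary_eq_of_colorBU_eq
    (hα : ∀ σ τ, Covers ltα σ τ → 2 ≤ (boundary ltα τ).card)
    (hβ : ∀ σ τ, Covers ltβ σ τ → 2 ≤ (boundary ltβ τ).card) {s : ℕ} {σ : α} {σ' : β}
    (h : colorBU ltα (s + 2) σ = colorBU ltβ (s + 2) σ') :
    (coboundary ltα σ).val.map (colorBU ltα (s + 1))
      = (coboundary ltβ σ').val.map (colorBU ltβ (s + 1)) := by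
  have hsnd := congrArg (map Prod.snd) (colorBU_succ_eq_iff.1 h).2.2
  simp only [map_map, Function.comp_def] at hsnd
  rw [map_colorBU_upperAdj_snd, map_colorBU_upperAdj_snd] at hsnd
  exact bind_replicate_injective (fun _ => faceCount_sub_one_pos hα)
    (fun _ => faceCount_sub_one_pos hβ) hsnd

theorem map_colorBU_lowerAdj_eq_of_colorBU_eq
    (hα : ∀ σ τ, Covers ltα σ τ → 2 ≤ (boundary ltα τ).card)
    (hβ : ∀ σ τ, Covers ltβ σ τ → 2 ≤ (boundary ltβ τ).card) {s : ℕ} {σ : α} {σ' : β}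
    (h : colorBU ltα (s + 3) σ = colorBU ltβ (s + 3) σ') :
    (lowerAdj ltα σ).val.map (fun p => (colorBU ltα (s + 1) p.1, colorBU ltα (s + 1) p.2))
      = (lowerAdj ltβ σ').val.map
          (fun p => (colorBU ltβ (s + 1) p.1, colorBU ltβ (s + 1) p.2)) := by
  classical
  obtain ⟨hσ, hB, -⟩ := colorBU_succ_eq_iff.1 h
  rw [map_lowerAdj_pair, map_lowerAdj_pair]
  refine bind_eq_bind_of_map_eq hB fun τ _ τ' _ hτ => ?_
  rw [(colorBU_succ_eq_iff.1 hτ).1, (colorBU_succ_eq_iff.1 hσ).1,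
    map_colorBU_coboundary_eq_of_colorBU_eq hα hβ hτ]

theorem colorBU_eq_of_color_eq :
    ∀ (t : ℕ) (σ : α) (σ' : β), color ltα t σ = color ltβ t σ' →
      colorBU ltα t σ = colorBU ltβ t σ'
  | 0, _, _, _ => rfl
  | t + 1, _, _, h => by
    obtain ⟨h₀, hB, -, -, hU⟩ := color_succ_eq_iff.1 h
    have ih := colorBU_eq_of_color_eq t
    exact colorBU_succ_eq_iff.2 ⟨ih _ _ h₀, map_eq_map_of_map_eq hB fun x _ y _ => ih x y,
      map_prod_eq_map_prod_of_map_prod_eq hU ih⟩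

theorem color_eq_of_colorBU_eq
    (hα : ∀ σ τ, Covers ltα σ τ → 2 ≤ (boundary ltα τ).card)
    (hβ : ∀ σ τ, Covers ltβ σ τ → 2 ≤ (boundary ltβ τ).card) :
    ∀ (t : ℕ) (σ : α) (σ' : β), colorBU ltα (2 * t + 1) σ = colorBU ltβ (2 * t + 1) σ' →
      color ltα t σ = color ltβ t σ'
  | 0, _, _, _ => rfl
  | t + 1, σ, σ', h => by
    have ih := color_eq_of_colorBU_eq hα hβ t
    have ih' (x : α) (y : β) (hxy : colorBU ltα (2 * t + 2) x = colorBU ltβ (2 * t + 2) y) :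
        color ltα t x = color ltβ t y :=
      ih x y (colorBU_succ_eq_iff.1 hxy).1
    obtain ⟨h₀, hB, hU⟩ := colorBU_succ_eq_iff.1 h
    exact color_succ_eq_iff.2 ⟨ih' _ _ h₀, map_eq_map_of_map_eq hB fun x _ y _ => ih' x y,
      map_eq_map_of_map_eq (map_colorBU_coboundary_eq_of_colorBU_eq hα hβ h)
        fun x _ y _ => ih' x y,
      map_prod_eq_map_prod_of_map_prod_eq (map_colorBU_lowerAdj_eq_of_colorBU_eq hα hβ h) ih,
      map_prod_eq_map_prod_of_map_prod_eq hU ih'⟩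

end Simulation

end GWL

/-- On finite graded posets in which every element of positive dimension
has at least two boundary elements, the GWL test (all four adjacencies, coloring `a_t`) and
the `GWL_{B,↑}` test (only boundary and upper adjacency, coloring `b_t`) have the same
expressive power: `b_{2t+1}` refines `a_t`, `a_t` refines `b_t`, and the two notions of
equivalence of the two posets coincide. -/
theorem gwl_equiv_gwlBU
    {α β : Type} [Fintype α] [Fintype β]
    (ltα : α → α → Prop) (dimα : α → ℕ) (ltβ : β → β → Prop) (dimβ : β → ℕ)
    (hP : GWL.IsGradedPoset ltα dimα) (hP' : GWL.IsGradedPoset ltβ dimβ)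
    (hbα : ∀ σ : α, 0 < dimα σ → 2 ≤ (GWL.boundary ltα σ).card)
    (hbβ : ∀ σ : β, 0 < dimβ σ → 2 ≤ (GWL.boundary ltβ σ).card) :
    (∀ (t : ℕ) (σ : α) (σ' : β),
        GWL.colorBU ltα (2 * t + 1) σ = GWL.colorBU ltβ (2 * t + 1) σ' →
        GWL.color ltα t σ = GWL.color ltβ t σ') ∧
    (∀ (t : ℕ) (σ : α) (σ' : β),
        GWL.color ltα t σ = GWL.color ltβ t σ' →
        GWL.colorBU ltα t σ = GWL.colorBU ltβ t σ') ∧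
    ((∀ t : ℕ, GWL.hist ltα t = GWL.hist ltβ t) ↔
        (∀ t : ℕ, GWL.histBU ltα t = GWL.histBU ltβ t)) := by
  have hard := GWL.color_eq_of_colorBU_eq
    (fun _ _ => GWL.two_le_card_boundary_of_covers hP hbα)
    (fun _ _ => GWL.two_le_card_boundary_of_covers hP' hbβ)
  refine ⟨hard, GWL.colorBU_eq_of_color_eq, fun H t => ?_, fun H t => ?_⟩
  · exact Multiset.map_eq_map_of_map_eq (H t) fun x _ y _ => GWL.colorBU_eq_of_color_eq t x y
  · exact Multiset.map_eq_map_of_map_eq (H (2 * t + 1)) fun x _ y _ => hard t x y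
end

section
/- Let P and P' be finite graded posets in which every element of positive dimension has at least two boundary elements. Let c be a coloring of the elements of P and P' into a common color set such that equal colors imply equal boundary cardinalities: c(δ) = c(δ') implies |B(δ)| = |B(δ')| for all elements δ, δ' of P or P'. Suppose σ ∈ P and σ' ∈ P' have equal upper-adjacency pair multisets: {{(c(σ''), c(τ)) : (σ'', τ) ∈ N↑(σ)}} = {{(c(σ''), c(τ)) : (σ'', τ) ∈ N↑(σ')}}. Then the coboundary color multisets are equal: {{c(δ) : δ ∈ C(σ)}} = {{c(δ') : δ' ∈ C(σ')}}. (Each δ ∈ C(σ) contributes its color exactly |B(δ)| − 1 ≥ 1 times as the second component of an upper-adjacency pair, so the coboundary multiset is recoverable by dividing multiplicities by |B(δ)| − 1.) -/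
/-!
A pair `(σ'', τ) ∈ N↑(σ)` is a coface `τ ∈ C(σ)` together with a facet `σ'' ≠ σ` of `τ`,
so each `τ ∈ C(σ)` occurs exactly `|B(τ)| - 1` times as a second component. As the colour `s` of
`τ` determines `|B(τ)| = w s`, the multiplicity of `s` among the second components is its
multiplicity in `C(σ)` times `w s - 1`; and `w s ≥ 2` whenever `s` occurs in `C(σ)`, since
cofaces have positive dimension. Dividing by `w s - 1` recovers the coboundary colours.
-/

open Finset

namespace GWL

variable {α S : Type} [Fintype α] (lt : α → α → Prop)

lemma card_filter_snd_upperAdj [DecidableEq α] {σ τ : α} (hτ : τ ∈ coboundary lt σ) :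
    #{p ∈ upperAdj lt σ | p.2 = τ} = #(boundary lt τ) - 1 := by
  have hσ : σ ∈ boundary lt τ := by simpa [boundary, coboundary] using hτ
  have hfiber : {p ∈ upperAdj lt σ | p.2 = τ} = ((boundary lt τ).erase σ).map
      ⟨(·, τ), fun _ _ h => (Prod.mk.inj h).1⟩ := by
    ext ⟨σ', τ'⟩
    simp only [upperAdj, boundary, coboundary, mem_filter, mem_univ, true_and, mem_map,
      mem_erase] at hτ ⊢
    constructor
    · rintro ⟨⟨-, hcov, hne⟩, rfl⟩
      exact ⟨σ', ⟨hne, hcov⟩, rfl⟩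
    · rintro ⟨_, ⟨hne, hcov⟩, h⟩
      obtain ⟨rfl, rfl⟩ := Prod.mk.inj h
      exact ⟨⟨hτ, hcov, hne⟩, rfl⟩
  rw [hfiber, card_map, card_erase_of_mem hσ]

variable [DecidableEq S] (c : α → S)

lemma count_map_snd_upperAdj (σ : α) (s : S) :
    ((upperAdj lt σ).val.map (c ·.2)).count s =
      ∑ τ ∈ coboundary lt σ with s = c τ, (#(boundary lt τ) - 1) := by
  classical
  rw [Multiset.count_map, ← filter_val, card_val]
  refine (card_eq_sum_card_fiberwise (f := Prod.snd) fun p hp => ?_).trans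
    (sum_congr rfl fun τ hτ => ?_)
  · simp_all [upperAdj, coboundary]
  · rw [filter_filter]
    simp only [mem_filter] at hτ
    rw [← card_filter_snd_upperAdj lt hτ.1]
    congr 1
    ext p
    simp +contextual [hτ.2]

variable {c} {w : S → ℕ}

lemma count_map_snd_upperAdj_eq_mul (hw : ∀ τ, #(boundary lt τ) = w (c τ)) (σ : α) (s : S) :
    ((upperAdj lt σ).val.map (c ·.2)).count s =
      ((coboundary lt σ).val.map c).count s * (w s - 1) := by
  rw [count_map_snd_upperAdj, sum_congr rfl fun τ hτ => by rw [hw, ← (mem_filter.1 hτ).2],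
    sum_const, smul_eq_mul, Multiset.count_map, ← filter_val, card_val]

lemma count_map_coboundary_eq_div (hw : ∀ τ, #(boundary lt τ) = w (c τ)) {σ : α}
    (hb : ∀ τ ∈ coboundary lt σ, 2 ≤ #(boundary lt τ)) (s : S) :
    ((coboundary lt σ).val.map c).count s =
      ((upperAdj lt σ).val.map (c ·.2)).count s / (w s - 1) := by
  rw [count_map_snd_upperAdj_eq_mul lt hw]
  by_cases hs : s ∈ (coboundary lt σ).val.map c
  · obtain ⟨τ, hτ, rfl⟩ := Multiset.mem_map.1 hs
    have := hb τ hτ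
    rw [hw] at this
    rw [Nat.mul_div_cancel _ (by omega)]
  · rw [Multiset.count_eq_zero_of_notMem hs, zero_mul, Nat.zero_div]

lemma IsGradedPoset.two_le_card_boundary_of_mem_coboundary {dim : α → ℕ}
    (hP : IsGradedPoset lt dim) (hb : ∀ σ, 0 < dim σ → 2 ≤ #(boundary lt σ)) {σ τ : α}
    (hτ : τ ∈ coboundary lt σ) :
    2 ≤ #(boundary lt τ) :=
  hb τ <| by rw [hP.cover σ τ (by simpa [coboundary] using hτ)]; omega

end GWL

/-- In finite graded posets where every element of positive dimension has
at least two boundary elements, the coboundary color multiset is recoverable from the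
upper-adjacency pair multiset: if a coloring `c` (into a common color set, compared across
both posets) determines boundary cardinalities, and `σ ∈ P`, `σ' ∈ P'` have equal
upper-adjacency pair multisets, then their coboundary color multisets are equal. -/
theorem coboundary_recoverable_from_upper_adjacency
    {α β S : Type} [Fintype α] [Fintype β]
    (ltα : α → α → Prop) (dimα : α → ℕ) (ltβ : β → β → Prop) (dimβ : β → ℕ)
    (hP : GWL.IsGradedPoset ltα dimα) (hP' : GWL.IsGradedPoset ltβ dimβ)
    (hbα : ∀ σ : α, 0 < dimα σ → 2 ≤ (GWL.boundary ltα σ).card)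
    (hbβ : ∀ σ : β, 0 < dimβ σ → 2 ≤ (GWL.boundary ltβ σ).card)
    (cα : α → S) (cβ : β → S)
    (hc : ∀ x y : α ⊕ β, Sum.elim cα cβ x = Sum.elim cα cβ y →
        Sum.elim (fun δ => (GWL.boundary ltα δ).card) (fun δ => (GWL.boundary ltβ δ).card) x
          = Sum.elim (fun δ => (GWL.boundary ltα δ).card)
              (fun δ => (GWL.boundary ltβ δ).card) y)
    (σ : α) (σ' : β)
    (hupper : (GWL.upperAdj ltα σ).val.map (fun p => (cα p.1, cα p.2))
        = (GWL.upperAdj ltβ σ').val.map (fun p => (cβ p.1, cβ p.2))) :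
    (GWL.coboundary ltα σ).val.map cα = (GWL.coboundary ltβ σ').val.map cβ := by
  classical
  have hfac : Function.FactorsThrough _ (Sum.elim cα cβ) := hc
  obtain ⟨w, hwα, hwβ⟩ : ∃ w : S → ℕ, (∀ τ, #(GWL.boundary ltα τ) = w (cα τ)) ∧
      ∀ τ, #(GWL.boundary ltβ τ) = w (cβ τ) :=
    ⟨Function.extend _ _ 0, fun τ => (hfac.extend_apply 0 (.inl τ)).symm,
      fun τ => (hfac.extend_apply 0 (.inr τ)).symm⟩
  have hsnd := congrArg (Multiset.map Prod.snd) hupper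
  simp only [Multiset.map_map, Function.comp_def] at hsnd
  ext s
  rw [GWL.count_map_coboundary_eq_div ltα hwα
      (fun _ => hP.two_le_card_boundary_of_mem_coboundary ltα hbα),
    GWL.count_map_coboundary_eq_div ltβ hwβ
      (fun _ => hP'.two_le_card_boundary_of_mem_coboundary ltβ hbβ), hsnd]
end
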